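/- arXiv:1807.02003 — 3 statements merged into one kernel-verified Lean document; each statement's English description precedes it below -/
import Mathlib

section
/- Assume the integrability condition C := ∫_{supp(h)} |g(s)| |h(s)|^{−(c+1)/2} ds < ∞, and let w : ℝ× → ℂ be continuous with support contained in a compact subset of ℝ×. Then the function x ↦ |x|^{(c+1)/2}(𝒢w)(x) belongs to L¹(ℝ×, dx/|x|), and for Lebesgue-almost every y ∈ ℝ×: ∫_{ℝ×} |x|^{(c+1)/2} (𝒢w)(x) e^{−i log|x|·log|y|} e^{iπ δ(x)δ(y)} dx/|x| = μ(y) · ∫_{ℝ×} |x|^{(c+1)/2} w(x) e^{−i log|x|·log|y|} e^{iπ δ(x)δ(y)} dx/|x|. In other words, the multiplicative Fourier transform intertwines 𝒢 (conjugated by the multiplication map M : φ ↦ |x|^{(c+1)/2}φ) with multiplication by μ. -/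
open MeasureTheory Real Set Complex

noncomputable section

/-- The Haar measure `dx/|x|` of the multiplicative group `ℝ× = ℝ \ {0}`. -/
def mulHaar : Measure ℝ := volume.withDensity fun x => ENNReal.ofReal |x|⁻¹

/-- `δ(x) = 0` for `x > 0` and `δ(x) = 1` for `x < 0`. -/
def deltaSgn (x : ℝ) : ℝ := if x < 0 then 1 else 0

/-- The operator `𝒢`, acting by `(𝒢 w)(x) = ∫_{supp h} g(s) w(h(s)x) ds`. -/
def Gop {d : ℕ} (g h : (Fin d → ℝ) → ℝ) (w : ℝ → ℂ) (x : ℝ) : ℂ :=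
  ∫ s in {s | h s ≠ 0}, (g s : ℂ) * w (h s * x)

/-- The function `m₊` from the paper. -/
def mPlus {d : ℕ} (c : ℝ) (g h : (Fin d → ℝ) → ℝ) (x : ℝ) : ℂ :=
  ∫ s in {s | h s ≠ 0},
    (g s : ℂ) * ((|h s| ^ (-(c + 1) / 2) : ℝ) : ℂ) *
      Complex.exp (Complex.I * x * Real.log |h s|)

/-- The function `m₋` from the paper. -/
def mMinus {d : ℕ} (c : ℝ) (g h : (Fin d → ℝ) → ℝ) (x : ℝ) : ℂ :=
  ∫ s in {s | h s ≠ 0},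
    (g s : ℂ) * ((|h s| ^ (-(c + 1) / 2) : ℝ) : ℂ) *
      Complex.exp (Complex.I * x * Real.log |h s|) * (Real.sign (h s) : ℂ)

/-- The function `μ` on `ℝ×`. -/
def muFun {d : ℕ} (c : ℝ) (g h : (Fin d → ℝ) → ℝ) (y : ℝ) : ℂ :=
  if 0 < y then mPlus c g h (Real.log |y|) else mMinus c g h (Real.log |y|)

/-- The multiplicative character kernel `e^{-i log|x| log|y|} e^{iπ δ(x)δ(y)}`. -/
def mulChar' (x y : ℝ) : ℂ :=
  Complex.exp (-(Complex.I) * Real.log |x| * Real.log |y|) *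
    Complex.exp (Complex.I * Real.pi * deltaSgn x * deltaSgn y)

/-!
With `ρ = (c - 1) / 2` the measure `|x|^{(c+1)/2} dx/|x|` is `|x|^ρ dx`, and the substitution
`u = a x` gives `∫ |x|^ρ f(a x) dx = |a|^{-ρ-1} ∫ |u|^ρ f(u) du`. Hence the kernel
`(s, x) ↦ g(s) |x|^ρ w(h(s) x)` is integrable on `supp h × ℝ` by the integrability condition, and
Fubini applies. After exchanging the integrals, the same substitution with `a = h(s)` and the
multiplicativity of the character `χ(x, y) = e^{-i log|x| log|y|} e^{iπ δ(x) δ(y)}` of `ℝ×` pull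
out `|h(s)|^{-(c+1)/2} χ(h(s)⁻¹, y)`, whose integral against `g` is `μ(y)`.
-/

section MulHaar

variable {E : Type*} [NormedAddCommGroup E] [NormedSpace ℝ E]

lemma integral_mulHaar (f : ℝ → E) : ∫ x, f x ∂mulHaar = ∫ x, |x|⁻¹ • f x := by
  rw [mulHaar, integral_withDensity_eq_integral_toReal_smul (by fun_prop)
    (ae_of_all _ fun _ => ENNReal.ofReal_lt_top)]
  simp_rw [ENNReal.toReal_ofReal (inv_nonneg.2 (abs_nonneg _))]

lemma integrable_mulHaar_iff {f : ℝ → E} :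
    Integrable f mulHaar ↔ Integrable fun x => |x|⁻¹ • f x := by
  rw [mulHaar, integrable_withDensity_iff_integrable_smul' (by fun_prop)
    (ae_of_all _ fun _ => ENNReal.ofReal_lt_top)]
  simp_rw [ENNReal.toReal_ofReal (inv_nonneg.2 (abs_nonneg _))]

end MulHaar

lemma abs_inv_smul_abs_rpow_add_one_mul {x : ℝ} (hx : x ≠ 0) (r : ℝ) (z : ℂ) :
    |x|⁻¹ • (((|x| ^ (r + 1) : ℝ) : ℂ) * z) = ((|x| ^ r : ℝ) : ℂ) * z := by
  rw [real_smul, ← mul_assoc, ← ofReal_mul, rpow_add_one (abs_ne_zero.2 hx), mul_comm (|x| ^ r),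
    inv_mul_cancel_left₀ (abs_ne_zero.2 hx)]

lemma integral_abs_rpow_add_one_mul_mulHaar (r : ℝ) (f : ℝ → ℂ) :
    ∫ x, ((|x| ^ (r + 1) : ℝ) : ℂ) * f x ∂mulHaar = ∫ x, ((|x| ^ r : ℝ) : ℂ) * f x := by
  rw [integral_mulHaar]
  refine integral_congr_ae ?_
  filter_upwards [Measure.ae_ne volume 0] with x hx using abs_inv_smul_abs_rpow_add_one_mul hx r _

lemma integrable_abs_rpow_add_one_mul_mulHaar_iff (r : ℝ) {f : ℝ → ℂ} :
    Integrable (fun x => ((|x| ^ (r + 1) : ℝ) : ℂ) * f x) mulHaar ↔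
      Integrable fun x => ((|x| ^ r : ℝ) : ℂ) * f x := by
  rw [integrable_mulHaar_iff]
  refine integrable_congr ?_
  filter_upwards [Measure.ae_ne volume 0] with x hx using abs_inv_smul_abs_rpow_add_one_mul hx r _

section Scaling

variable {E : Type*} [NormedAddCommGroup E] [NormedSpace ℝ E] {ρ a : ℝ}

lemma abs_rpow_smul_comp_mul_left (ha : a ≠ 0) (f : ℝ → E) (x : ℝ) :
    |x| ^ ρ • f (a * x) = |a| ^ (-ρ) • (|a * x| ^ ρ • f (a * x)) := by
  rw [smul_smul, abs_mul, mul_rpow (abs_nonneg a) (abs_nonneg x), ← mul_assoc,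
    ← rpow_add (abs_pos.2 ha), neg_add_cancel, rpow_zero, one_mul]

lemma integrable_abs_rpow_smul_comp_mul_left (ha : a ≠ 0) {f : ℝ → E}
    (hf : Integrable fun x => |x| ^ ρ • f x) :
    Integrable fun x => |x| ^ ρ • f (a * x) := by
  simp_rw [abs_rpow_smul_comp_mul_left ha f]
  exact ((integrable_comp_mul_left_iff (fun u => |u| ^ ρ • f u) ha).2 hf).smul _

lemma integral_abs_rpow_smul_comp_mul_left (ha : a ≠ 0) (f : ℝ → E) :
    ∫ x, |x| ^ ρ • f (a * x) = |a| ^ (-ρ - 1) • ∫ x, |x| ^ ρ • f x := by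
  simp_rw [abs_rpow_smul_comp_mul_left ha f]
  rw [integral_smul, Measure.integral_comp_mul_left (fun u => |u| ^ ρ • f u), smul_smul, abs_inv,
    rpow_sub_one (abs_ne_zero.2 ha), div_eq_mul_inv]

end Scaling

lemma ContinuousOn.continuous_of_eq_zero_off_compact {X E : Type*} [TopologicalSpace X]
    [T2Space X] [TopologicalSpace E] [Zero E] {f : X → E} {U K : Set X} (hf : ContinuousOn f U)
    (hU : IsOpen U) (hK : IsCompact K) (hKU : K ⊆ U) (hfK : ∀ x ∉ K, f x = 0) :
    Continuous f :=
  hf.continuous_of_tsupport_subset hU <|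
    (closure_minimal (Function.support_subset_iff'.2 hfK) hK.isClosed).trans hKU

lemma integrable_abs_rpow_smul_of_continuousOn {E : Type*} [NormedAddCommGroup E]
    [NormedSpace ℝ E] {w : ℝ → E} {K : Set ℝ} (hw : ContinuousOn w {x | x ≠ 0})
    (hK : IsCompact K) (hK0 : K ⊆ {x | x ≠ 0}) (hwK : ∀ x ∉ K, w x = 0) (ρ : ℝ) :
    Integrable fun x => |x| ^ ρ • w x := by
  have hvK : ∀ x ∉ K, |x| ^ ρ • w x = 0 := fun x hx => by simp [hwK x hx]
  have hv : ContinuousOn (fun x => |x| ^ ρ • w x) {x | x ≠ 0} :=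
    (continuous_abs.continuousOn.rpow_const fun x hx => Or.inl (abs_ne_zero.2 hx)).smul hw
  exact (hv.continuous_of_eq_zero_off_compact isOpen_ne hK hK0 hvK).integrable_of_hasCompactSupport
    (HasCompactSupport.intro hK hvK)

lemma exp_I_pi_deltaSgn_mul (x y : ℝ) :
    exp (I * π * deltaSgn x * deltaSgn y) = if x < 0 ∧ y < 0 then -1 else 1 := by
  unfold deltaSgn
  split_ifs <;> simp_all [mul_comm I, exp_pi_mul_I]

@[fun_prop]
lemma measurable_deltaSgn : Measurable deltaSgn :=
  Measurable.ite measurableSet_Iio measurable_const measurable_const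

lemma measurable_mulChar' (y : ℝ) : Measurable fun x => mulChar' x y := by
  unfold mulChar'
  fun_prop

lemma norm_mulChar' (x y : ℝ) : ‖mulChar' x y‖ = 1 := by
  rw [mulChar', exp_I_pi_deltaSgn_mul, norm_mul, norm_exp]
  split_ifs <;> simp [mul_re]

lemma mulChar'_mul {x x' : ℝ} (hx : x ≠ 0) (hx' : x' ≠ 0) (y : ℝ) :
    mulChar' (x * x') y = mulChar' x y * mulChar' x' y := by
  simp only [mulChar', exp_I_pi_deltaSgn_mul, abs_mul,
    log_mul (abs_ne_zero.2 hx) (abs_ne_zero.2 hx'), ofReal_add, mul_add, add_mul, Complex.exp_add]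
  rcases hx.lt_or_gt with hx | hx <;> rcases hx'.lt_or_gt with hx' | hx' <;>
    by_cases hy : y < 0 <;> simp [mul_neg_iff, hx, hx', hx.not_gt, hx'.not_gt, hy]

lemma mulChar'_inv {a : ℝ} (ha : a ≠ 0) (y : ℝ) :
    mulChar' a⁻¹ y = exp (I * (log |y| : ℝ) * log |a|) * (if y < 0 then (sign a : ℂ) else 1) := by
  rw [mulChar', exp_I_pi_deltaSgn_mul, abs_inv, Real.log_inv, ofReal_neg]
  have hphase : -I * -(log |a| : ℂ) * (log |y| : ℝ) = I * (log |y| : ℝ) * log |a| := by ring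
  rw [hphase]
  rcases ha.lt_or_gt with ha | ha <;> simp [ha, ha.not_gt, sign_of_neg, sign_of_pos]

lemma integral_abs_rpow_mul_comp_mul_left_mulChar' {w : ℝ → ℂ} {ρ a : ℝ} (ha : a ≠ 0) (y : ℝ) :
    ∫ x, ((|x| ^ ρ : ℝ) : ℂ) * w (a * x) * mulChar' x y =
      ((|a| ^ (-ρ - 1) : ℝ) : ℂ) * mulChar' a⁻¹ y *
        ∫ u, ((|u| ^ ρ : ℝ) : ℂ) * w u * mulChar' u y := by
  have hsubst : ∀ x, ((|x| ^ ρ : ℝ) : ℂ) * w (a * x) * mulChar' x y =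
      |x| ^ ρ • (w (a * x) * mulChar' (a⁻¹ * (a * x)) y) := fun x => by
    rw [inv_mul_cancel_left₀ ha, real_smul, mul_assoc]
  have hsplit : ∀ᵐ u, |u| ^ ρ • (w u * mulChar' (a⁻¹ * u) y) =
      mulChar' a⁻¹ y * (((|u| ^ ρ : ℝ) : ℂ) * w u * mulChar' u y) := by
    filter_upwards [Measure.ae_ne volume 0] with u hu
    rw [mulChar'_mul (inv_ne_zero ha) hu, real_smul]
    ring
  simp_rw [hsubst]
  rw [integral_abs_rpow_smul_comp_mul_left ha (fun u => w u * mulChar' (a⁻¹ * u) y),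
    integral_congr_ae hsplit, integral_const_mul, real_smul, mul_assoc]

lemma muFun_eq_integral_mulChar' {d : ℕ} (c : ℝ) {g h : (Fin d → ℝ) → ℝ} (hh : Measurable h)
    {y : ℝ} (hy : y ≠ 0) :
    muFun c g h y = ∫ s in {s | h s ≠ 0},
      (g s : ℂ) * ((|h s| ^ (-(c + 1) / 2) : ℝ) : ℂ) * mulChar' (h s)⁻¹ y := by
  have hS : MeasurableSet {s | h s ≠ 0} := (hh (measurableSet_singleton 0)).compl
  rcases hy.lt_or_gt with hy | hy
  · rw [muFun, if_neg hy.not_gt, mMinus]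
    refine setIntegral_congr_fun hS fun s hs => ?_
    rw [mulChar'_inv hs, if_pos hy]
    ring
  · rw [muFun, if_pos hy, mPlus]
    refine setIntegral_congr_fun hS fun s hs => ?_
    rw [mulChar'_inv hs, if_neg hy.not_gt, mul_one]

section ScalingKernel

variable {α : Type*} [MeasurableSpace α] {ν : Measure α} {g h : α → ℝ} {w : ℝ → ℂ}
  {ρ : ℝ}

lemma integrable_scaling_kernel (hg : Measurable g) (hh : Measurable h) (hw : Measurable w)
    (hh0 : ∀ᵐ s ∂ν, h s ≠ 0) (hC : Integrable (fun s => |g s| * |h s| ^ (-ρ - 1)) ν)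
    (hW : Integrable fun u => |u| ^ ρ • w u) :
    Integrable (fun p : α × ℝ => (g p.1 : ℂ) * |p.2| ^ ρ • w (h p.1 * p.2)) (ν.prod volume) := by
  have hnorm : ∀ s, h s ≠ 0 → ∫ x, ‖(g s : ℂ) * |x| ^ ρ • w (h s * x)‖ =
      |g s| * |h s| ^ (-ρ - 1) * ∫ u, |u| ^ ρ * ‖w u‖ := fun s hs => by
    have hscale := integral_abs_rpow_smul_comp_mul_left (ρ := ρ) hs (fun u => ‖w u‖)
    simp only [smul_eq_mul] at hscale
    simp_rw [norm_mul, norm_smul, norm_real, Real.norm_of_nonneg (rpow_nonneg (abs_nonneg _) _)]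
    rw [integral_const_mul, hscale, Real.norm_eq_abs, mul_assoc]
  rw [integrable_prod_iff (by fun_prop)]
  constructor
  · filter_upwards [hh0] with s hs
    exact (integrable_abs_rpow_smul_comp_mul_left hs hW).const_mul _
  · refine (hC.mul_const (∫ u, |u| ^ ρ * ‖w u‖)).congr ?_
    filter_upwards [hh0] with s hs using (hnorm s hs).symm

lemma integrable_abs_rpow_mul_integral_scaling_kernel [SFinite ν]
    (hF : Integrable (fun p : α × ℝ => (g p.1 : ℂ) * |p.2| ^ ρ • w (h p.1 * p.2)) (ν.prod volume)) :
    Integrable fun x => ((|x| ^ ρ : ℝ) : ℂ) * ∫ s, (g s : ℂ) * w (h s * x) ∂ν := by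
  refine hF.integral_prod_right.congr (ae_of_all _ fun x => ?_)
  dsimp only
  rw [← integral_const_mul]
  congr 1 with s
  rw [real_smul]
  ring

lemma integral_abs_rpow_mul_integral_scaling_kernel_mul [SFinite ν]
    (hF : Integrable (fun p : α × ℝ => (g p.1 : ℂ) * |p.2| ^ ρ • w (h p.1 * p.2)) (ν.prod volume))
    {φ : ℝ → ℂ} (hφ : AEStronglyMeasurable φ) (hφ1 : ∀ x, ‖φ x‖ ≤ 1) :
    ∫ x, ((|x| ^ ρ : ℝ) : ℂ) * (∫ s, (g s : ℂ) * w (h s * x) ∂ν) * φ x =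
      ∫ s, (g s : ℂ) * (∫ x, ((|x| ^ ρ : ℝ) : ℂ) * w (h s * x) * φ x) ∂ν := by
  calc ∫ x, ((|x| ^ ρ : ℝ) : ℂ) * (∫ s, (g s : ℂ) * w (h s * x) ∂ν) * φ x
      = ∫ x, (∫ s, (g s : ℂ) * |x| ^ ρ • w (h s * x) * φ x ∂ν) := by
        refine integral_congr_ae (ae_of_all _ fun x => ?_)
        dsimp only
        rw [← integral_const_mul, ← integral_mul_const]
        congr 1 with s
        rw [real_smul]
        ring
    _ = ∫ s, (∫ x, (g s : ℂ) * |x| ^ ρ • w (h s * x) * φ x) ∂ν :=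
        (integral_integral_swap (hF.mul_bdd hφ.comp_snd (ae_of_all _ fun p => hφ1 p.2))).symm
    _ = ∫ s, (g s : ℂ) * (∫ x, ((|x| ^ ρ : ℝ) : ℂ) * w (h s * x) * φ x) ∂ν := by
        refine integral_congr_ae (ae_of_all _ fun s => ?_)
        dsimp only
        rw [← integral_const_mul]
        congr 1 with x
        rw [real_smul]
        ring

end ScalingKernel

theorem fourier_intertwines_G_with_multiplication_general
    (d : ℕ) (c : ℝ) (g h : (Fin d → ℝ) → ℝ)
    (hg : Measurable g) (hh : Measurable h)
    (hC : IntegrableOn (fun s => |g s| * |h s| ^ (-(c + 1) / 2)) {s | h s ≠ 0} volume)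
    (w : ℝ → ℂ) (hw : ContinuousOn w {x | x ≠ 0})
    (K : Set ℝ) (hK : IsCompact K) (hK0 : K ⊆ {x | x ≠ 0})
    (hwK : ∀ x ∉ K, w x = 0) :
    Integrable (fun x => ((|x| ^ ((c + 1) / 2) : ℝ) : ℂ) * Gop g h w x) mulHaar ∧
    ∀ᵐ y : ℝ ∂volume, y ≠ 0 →
      (∫ x, ((|x| ^ ((c + 1) / 2) : ℝ) : ℂ) * Gop g h w x * mulChar' x y ∂mulHaar) =
        muFun c g h y *
          ∫ x, ((|x| ^ ((c + 1) / 2) : ℝ) : ℂ) * w x * mulChar' x y ∂mulHaar := by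
  set ρ := (c - 1) / 2
  have hweight : (c + 1) / 2 = ρ + 1 := by ring
  have hexp : -(c + 1) / 2 = -ρ - 1 := by ring
  have hS : ∀ᵐ s ∂(volume.restrict {s | h s ≠ 0}), h s ≠ 0 :=
    ae_restrict_mem (hh (measurableSet_singleton 0)).compl
  have hF := integrable_scaling_kernel hg hh
    (hw.continuous_of_eq_zero_off_compact isOpen_ne hK hK0 hwK).measurable hS (hexp ▸ hC)
    (integrable_abs_rpow_smul_of_continuousOn hw hK hK0 hwK ρ)
  simp only [hweight, mul_assoc]
  refine ⟨(integrable_abs_rpow_add_one_mul_mulHaar_iff ρ).2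
    (integrable_abs_rpow_mul_integral_scaling_kernel hF), ae_of_all _ fun y hy => ?_⟩
  rw [integral_abs_rpow_add_one_mul_mulHaar, integral_abs_rpow_add_one_mul_mulHaar]
  simp only [← mul_assoc]
  unfold Gop
  rw [integral_abs_rpow_mul_integral_scaling_kernel_mul hF
    (measurable_mulChar' y).aestronglyMeasurable (fun x => (norm_mulChar' x y).le),
    muFun_eq_integral_mulChar' c hh hy, ← integral_mul_const]
  refine integral_congr_ae (hS.mono fun s hs => ?_)
  dsimp only
  rw [integral_abs_rpow_mul_comp_mul_left_mulChar' hs, hexp]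
  ring

/-- Under the integrability condition, for `w` continuous on `ℝ×` with
support contained in a compact subset of `ℝ×`, the function `x ↦ |x|^{(c+1)/2} (𝒢w)(x)`
lies in `L¹(ℝ×, dx/|x|)`, and for a.e. `y ∈ ℝ×` the multiplicative Fourier transform of
`M(𝒢w)` equals `μ(y)` times that of `Mw`: the multiplicative Fourier transform
intertwines `𝒢` (conjugated by `M : φ ↦ |x|^{(c+1)/2} φ`) with multiplication by `μ`. -/
theorem fourier_intertwines_G_with_multiplication
    (d : ℕ) (hd : 1 ≤ d) (c : ℝ) (g h : (Fin d → ℝ) → ℝ)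
    (hg : Measurable g) (hh : Measurable h)
    (hC : IntegrableOn (fun s => |g s| * |h s| ^ (-(c + 1) / 2)) {s | h s ≠ 0} volume)
    (w : ℝ → ℂ) (hw : ContinuousOn w {x | x ≠ 0})
    (K : Set ℝ) (hK : IsCompact K) (hK0 : K ⊆ {x | x ≠ 0})
    (hwK : ∀ x ∉ K, w x = 0) :
    Integrable (fun x => ((|x| ^ ((c + 1) / 2) : ℝ) : ℂ) * Gop g h w x) mulHaar ∧
    ∀ᵐ y : ℝ ∂volume, y ≠ 0 →
      (∫ x, ((|x| ^ ((c + 1) / 2) : ℝ) : ℂ) * Gop g h w x * mulChar' x y ∂mulHaar) =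
        muFun c g h y *
          ∫ x, ((|x| ^ ((c + 1) / 2) : ℝ) : ℂ) * w x * mulChar' x y ∂mulHaar :=
  fourier_intertwines_G_with_multiplication_general d c g h hg hh hC w hw K hK hK0 hwK

end
end

section
/- Let v₁ : ℝ → [0,∞) be measurable with ∫_ℝ |t| v₁(t) dt < ∞, and define ψ(y) := exp(∫_ℝ (e^{iyt} − 1) v₁(t) dt) for y ∈ ℝ. Then for every x ∈ ℝ: |ψ(x)| = exp( − ∫₀^x Im( (F₊(uv₁))(y) ) dy ), where (uv₁)(t) := t·v₁(t) and (F₊ g)(y) := ∫_ℝ e^{iyt} g(t) dt. -/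
/-!
Since `‖exp z‖ = exp (re z)`, `|ψ(x)| = exp (∫ (cos (x t) - 1) v₁(t) dt)`, while
`Im (F₊(uv₁))(y) = ∫ sin (y t) t v₁(t) dt`. Integrating the latter over `y ∈ [0, x]` and
swapping the integrals (the integrand is dominated by `|t v₁(t)|`), the inner integral is
`∫₀^x sin (y t) t dy = 1 - cos (x t)`.
-/

open MeasureTheory Real Set Complex

noncomputable section

/-- The infinitely divisible characteristic function
`ψ(y) = exp(∫_ℝ (e^{iyt} - 1) v₁(t) dt)`. -/
def psiCF (v₁ : ℝ → ℝ) (y : ℝ) : ℂ :=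
  Complex.exp (∫ t : ℝ, (Complex.exp (Complex.I * y * t) - 1) * (v₁ t : ℂ))

/-- The Fourier transform `(F₊ g)(y) = ∫_ℝ e^{iyt} g(t) dt` of `uv₁ : t ↦ t v₁(t)`. -/
def fourierUV (v₁ : ℝ → ℝ) (y : ℝ) : ℂ :=
  ∫ t : ℝ, Complex.exp (Complex.I * y * t) * ((t * v₁ t : ℝ) : ℂ)

theorem I_mul_ofReal_mul_ofReal (y t : ℝ) : I * y * t = ((y * t : ℝ) : ℂ) * I := by
  push_cast
  ring

/-- At `t = 0` both sides vanish, the right one through `x / 0 = 0`. -/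
theorem integral_sin_mul_right (x t : ℝ) :
    ∫ y in (0 : ℝ)..x, Real.sin (y * t) = (1 - Real.cos (x * t)) / t := by
  rcases eq_or_ne t 0 with rfl | ht
  · simp
  · rw [intervalIntegral.integral_comp_mul_right Real.sin ht, integral_sin]
    simp [smul_eq_mul, div_eq_inv_mul]

theorem intervalIntegral_integral_mul_swap {α : Type*} [MeasurableSpace α] {μ : Measure α}
    [SFinite μ] {f : ℝ → α → ℝ} (hf : Measurable (Function.uncurry f)) {C : ℝ}
    (hfC : ∀ y t, |f y t| ≤ C) {w : α → ℝ} (hw : Integrable w μ) (a b : ℝ) :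
    ∫ y in a..b, ∫ t, f y t * w t ∂μ = ∫ t, (∫ y in a..b, f y t) * w t ∂μ := by
  have : IsFiniteMeasure (volume.restrict (uIoc a b)) :=
    isFiniteMeasure_restrict.mpr measure_Ioc_lt_top.ne
  have hint : Integrable (Function.uncurry fun y t => f y t * w t)
      ((volume.restrict (uIoc a b)).prod μ) :=
    (hw.comp_snd _).bdd_mul hf.aestronglyMeasurable (ae_of_all _ fun p => hfC p.1 p.2)
  simp_rw [intervalIntegral_integral_swap hint, intervalIntegral.integral_mul_const]

section

variable {v : ℝ → ℝ}

theorem integrable_cexp_I_mul_sub_one_mul (hv : Measurable v)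
    (hint : Integrable fun t => |t| * v t) (y : ℝ) :
    Integrable fun t : ℝ => (cexp (I * y * t) - 1) * (v t : ℂ) := by
  refine (hint.norm.const_mul |y|).mono' (by fun_prop) (ae_of_all _ fun t => ?_)
  have h := Real.norm_exp_I_mul_ofReal_sub_one_le (x := y * t)
  push_cast [← mul_assoc] at h
  calc ‖(cexp (I * y * t) - 1) * (v t : ℂ)‖ ≤ ‖(y * t : ℝ)‖ * |v t| := by
        rw [norm_mul, Complex.norm_real, Real.norm_eq_abs]
        exact mul_le_mul_of_nonneg_right h (abs_nonneg _)
    _ = |y| * ‖|t| * v t‖ := by simp [mul_assoc]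

theorem integrable_cexp_I_mul_mul_ofReal (hv : Measurable v)
    (hint : Integrable fun t => |t| * v t) (y : ℝ) :
    Integrable fun t : ℝ => cexp (I * y * t) * ((t * v t : ℝ) : ℂ) := by
  refine hint.norm.mono' (by fun_prop) (ae_of_all _ fun t => ?_)
  rw [norm_mul, I_mul_ofReal_mul_ofReal, Complex.norm_exp_ofReal_mul_I, one_mul]
  simp

theorem norm_psiCF (hv : Measurable v) (hint : Integrable fun t => |t| * v t) (x : ℝ) :
    ‖psiCF v x‖ = Real.exp (∫ t, (Real.cos (x * t) - 1) * v t) := by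
  rw [psiCF, Complex.norm_exp, ← RCLike.re_to_complex,
    ← integral_re (integrable_cexp_I_mul_sub_one_mul hv hint x)]
  congr 2 with t
  rw [RCLike.re_to_complex, Complex.re_mul_ofReal, Complex.sub_re, I_mul_ofReal_mul_ofReal,
    Complex.exp_ofReal_mul_I_re, Complex.one_re]

theorem im_fourierUV (hv : Measurable v) (hint : Integrable fun t => |t| * v t) (y : ℝ) :
    (fourierUV v y).im = ∫ t, Real.sin (y * t) * (t * v t) := by
  rw [fourierUV, ← RCLike.im_to_complex,
    ← integral_im (integrable_cexp_I_mul_mul_ofReal hv hint y)]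
  congr 1 with t
  rw [RCLike.im_to_complex, Complex.im_mul_ofReal, I_mul_ofReal_mul_ofReal,
    Complex.exp_ofReal_mul_I_im]

theorem intervalIntegral_im_fourierUV (hv : Measurable v)
    (hint : Integrable fun t => |t| * v t) (x : ℝ) :
    ∫ y in (0 : ℝ)..x, (fourierUV v y).im = ∫ t, (1 - Real.cos (x * t)) * v t := by
  have hw : Integrable fun t => t * v t := hint.norm.mono' (by fun_prop) (by simp)
  simp_rw [im_fourierUV hv hint,
    intervalIntegral_integral_mul_swap (by fun_prop) (fun y t => abs_sin_le_one (y * t)) hw,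
    integral_sin_mul_right]
  congr 1 with t
  rcases eq_or_ne t 0 with rfl | ht
  · simp
  · field_simp

end

theorem abs_psi_eq_exp_neg_integral_im_general
    (v₁ : ℝ → ℝ) (hv₁m : Measurable v₁)
    (hv₁int : Integrable (fun t => |t| * v₁ t)) :
    ∀ x : ℝ, ‖psiCF v₁ x‖ =
      Real.exp (-∫ y in (0 : ℝ)..x, (fourierUV v₁ y).im) := by
  intro x
  rw [norm_psiCF hv₁m hv₁int, intervalIntegral_im_fourierUV hv₁m hv₁int, ← integral_neg]
  congr 2 with t
  ring

/-- Let `v₁ : ℝ → [0,∞)` be measurable with `∫ |t| v₁(t) dt < ∞` and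
`ψ(y) = exp(∫ (e^{iyt} - 1) v₁(t) dt)`. Then for every `x ∈ ℝ`,
`|ψ(x)| = exp(-∫₀^x Im((F₊(uv₁))(y)) dy)`. -/
theorem abs_psi_eq_exp_neg_integral_im
    (v₁ : ℝ → ℝ) (hv₁m : Measurable v₁) (hv₁nonneg : ∀ t, 0 ≤ v₁ t)
    (hv₁int : Integrable (fun t => |t| * v₁ t)) :
    ∀ x : ℝ, ‖psiCF v₁ x‖ =
      Real.exp (-∫ y in (0 : ℝ)..x, (fourierUV v₁ y).im) :=
  abs_psi_eq_exp_neg_integral_im_general v₁ hv₁m hv₁int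
end
end

section
/- Let θ > 0 and β, c ∈ ℝ with q := β + (c−1)/2 > 0, and let f(s) := e^{−θ|s|} for s ∈ ℝ. Then ∫_ℝ f(s)^q ds < ∞, and the function m_f(x) := ∫_ℝ f(s)^q · e^{−i x log f(s)} ds (which equals both m_{f,+} and m_{f,−} for u(x) = |x|^β since f > 0) satisfies |m_f(x)| ≥ γ/(1 + |x|) for all x ∈ ℝ, where γ = (2/θ)(1 + q²)^{−1/2}. -/
/-! Since `f(s)^q = e^{-θq|s|}` and `log f(s) = -θ|s|`, the integrand of `m_f(x)` is
`e^{-z|s|}` with `z = θ(q - ix)`, so `m_f(x) = 2/z` exactly. The bound then reduces to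
`|q - ix| = √(q² + x²) ≤ √(1 + q²) (1 + |x|)`. -/

open MeasureTheory Real Set Complex

section CompAbs

variable {E : Type*} [NormedAddCommGroup E] {f : ℝ → E}

lemma integrableOn_comp_abs_Ioi (hf : IntegrableOn f (Ioi 0)) :
    IntegrableOn (fun x => f |x|) (Ioi 0) :=
  hf.congr_fun (fun x hx => by rw [abs_of_pos (mem_Ioi.mp hx)]) measurableSet_Ioi

lemma integrable_comp_abs (hf : IntegrableOn f (Ioi 0)) : Integrable (fun x => f |x|) := by
  have hIoi := integrableOn_comp_abs_Ioi hf
  have hIio : IntegrableOn (fun x => f |x|) (Iio 0) := by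
    have h : IntegrableOn (fun x => f |x|) (Ioi (-0)) := by rwa [neg_zero]
    simpa only [abs_neg] using h.comp_neg_Iio
  rw [← integrableOn_univ, ← Iic_union_Ioi (a := (0 : ℝ))]
  exact (Iff.mpr integrableOn_Iic_iff_integrableOn_Iio hIio).union hIoi

lemma integral_comp_abs_eq_two_smul [NormedSpace ℝ E] (hf : IntegrableOn f (Ioi 0)) :
    ∫ x, f |x| = (2 : ℝ) • ∫ x in Ioi 0, f x := by
  have hIoi : ∫ x in Ioi 0, f |x| = ∫ x in Ioi 0, f x :=
    setIntegral_congr_fun measurableSet_Ioi fun x hx => by rw [abs_of_pos (mem_Ioi.mp hx)]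
  have hIic : ∫ x in Iic 0, f |x| = ∫ x in Ioi 0, f x := by
    simpa [hIoi] using integral_comp_neg_Iic 0 fun x => f |x|
  rw [← intervalIntegral.integral_Iic_add_Ioi (integrable_comp_abs hf).integrableOn
    (integrable_comp_abs hf).integrableOn, hIic, hIoi, two_smul]

end CompAbs

lemma integral_cexp_neg_mul_abs {z : ℂ} (hz : 0 < z.re) :
    ∫ x : ℝ, cexp (-z * |x|) = 2 / z := by
  have hre : (-z).re < 0 := by simpa using hz
  rw [integral_comp_abs_eq_two_smul (f := fun t : ℝ => cexp (-z * t))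
    (integrableOn_exp_mul_complex_Ioi hre 0), integral_exp_mul_complex_Ioi hre 0]
  simp [div_eq_mul_inv]

lemma norm_ofReal_sub_mul_I_le (q x : ℝ) :
    ‖(q : ℂ) - x * I‖ ≤ √(1 + q ^ 2) * (1 + |x|) := by
  rw [sub_eq_add_neg, ← neg_mul, ← ofReal_neg, norm_add_mul_I,
    ← Real.sqrt_sq (by positivity : 0 ≤ 1 + |x|), ← Real.sqrt_mul (by positivity)]
  refine Real.sqrt_le_sqrt ?_
  nlinarith [sq_abs x, abs_nonneg x, mul_nonneg (sq_nonneg q) (abs_nonneg x)]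

/-- Let `θ > 0` and `q := β + (c-1)/2 > 0`, and `f(s) = e^{-θ|s|}` on
`ℝ`. Then `∫ f(s)^q ds < ∞`, and
`m_f(x) = ∫_ℝ f(s)^q e^{-i x log f(s)} ds` (which equals both `m_{f,+}` and `m_{f,-}`
for `u(x) = |x|^β`, since `f > 0`) satisfies `|m_f(x)| ≥ γ/(1+|x|)` for all `x`, where
`γ = (2/θ)(1+q²)^{-1/2}`. -/
theorem exponential_kernel_m_lower_bound
    (θ β c : ℝ) (hθ : 0 < θ) (hq : 0 < β + (c - 1) / 2) :
    Integrable (fun s : ℝ => Real.exp (-θ * |s|) ^ (β + (c - 1) / 2)) ∧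
    ∀ x : ℝ,
      (2 / θ) / Real.sqrt (1 + (β + (c - 1) / 2) ^ 2) / (1 + |x|) ≤
        ‖∫ s : ℝ, ((Real.exp (-θ * |s|) ^ (β + (c - 1) / 2) : ℝ) : ℂ) *
          Complex.exp (-(Complex.I) * x * Real.log (Real.exp (-θ * |s|)))‖ := by
  set q := β + (c - 1) / 2
  have hpow : ∀ s : ℝ, Real.exp (-θ * |s|) ^ q = Real.exp (-(θ * q) * |s|) := fun s => by
    rw [← Real.exp_mul]; ring_nf
  refine ⟨?_, fun x => ?_⟩
  · simpa only [hpow] using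
      integrable_comp_abs (integrableOn_exp_mul_Ioi (neg_neg_of_pos (mul_pos hθ hq)) 0)
  set z : ℂ := θ * (q - x * I)
  have hz : 0 < z.re := by simpa [z] using mul_pos hθ hq
  have hintegrand : ∀ s : ℝ, ((Real.exp (-θ * |s|) ^ q : ℝ) : ℂ) *
      cexp (-I * x * Real.log (Real.exp (-θ * |s|))) = cexp (-z * |s|) := fun s => by
    rw [hpow, Real.log_exp, ofReal_exp, ← Complex.exp_add]
    push_cast [z]
    ring_nf
  have hnorm : ‖z‖ ≤ θ * √(1 + q ^ 2) * (1 + |x|) := by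
    rw [norm_mul, norm_real, Real.norm_of_nonneg hθ.le, mul_assoc]
    exact mul_le_mul_of_nonneg_left (norm_ofReal_sub_mul_I_le q x) hθ.le
  simp_rw [hintegrand, integral_cexp_neg_mul_abs hz, norm_div, Complex.norm_ofNat, div_div]
  exact div_le_div_of_nonneg_left zero_le_two (norm_pos_iff.2 fun h => by simp [h] at hz) hnorm
end
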